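/- Let S be an essentially small triangulated category with metric {M_i}. Suppose B ∈ Mod-S is a homological object (i.e. Hom(−, B) restricts to a homological functor on S^op) lying in Fc(S), and A ∈ Mod-S is the colimit of Y(a_*) for a Cauchy sequence a_* in S. Choose j > 0 with Hom(Y(M_j), B) = 0, and choose n such that for all i ≥ n the triangles a_i → a_{i+1} → d_i have T^{-1} d_i and d_i in M_j. Then for any i ≥ n, every map Y(a_i) → B factors uniquely as Y(a_i) → A → B. -/

import Mathlib

/-
A homological `B` is additive, since the split triangle `x → x ⊞ y → y → x⟦1⟧` gives
`B(x ⊞ y) = B(x) ⊕ B(y)`; so by Yoneda, maps `Y(x) ⟶ B` are the elements of `B(x)`.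
For `k ≥ n` the exact sequence `B(d_k) → B(a_{k+1}) → B(a_k) → B(d_k⟦-1⟧)`, whose ends
vanish, makes restriction along `Y(a_k) ⟶ Y(a_{k+1})` bijective on maps to `B`. Hence every
`Y(a_i) ⟶ B` extends uniquely to a cocone on the tail of the sequence, i.e. to the colimit.
-/

namespace Stmt2

open CategoryTheory Category Limits Pretriangulated ZeroObject

universe v u

variable (S : Type u) [Category.{v} S] [Preadditive S] [HasZeroObject S]
  [HasShift S ℤ] [∀ n : ℤ, (CategoryTheory.shiftFunctor S n).Additive] [Pretriangulated S]

structure TriMetric where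
  M : ℕ → Set S
  zero_mem : ∀ i, (0 : S) ∈ M i
  antitone : ∀ i, M (i + 1) ⊆ M i
  ext_closed : ∀ i, ∀ T ∈ (distTriang S), T.obj₁ ∈ M i → T.obj₃ ∈ M i → T.obj₂ ∈ M i

variable {S}

def CauchySeq (μ : TriMetric S) (E : ℕ ⥤ S) : Prop :=
  ∀ i : ℕ, 0 < i → ∀ j : ℤ, ∃ N : ℕ, 0 < N ∧ ∀ m m' : ℕ, N ≤ m → ∀ (hmm : m < m'),
    ∀ (D : S) (g : E.obj m' ⟶ D) (h : D ⟶ (E.obj m)⟦(1 : ℤ)⟧),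
      Triangle.mk (E.map (homOfLE hmm.le)) g h ∈ (distTriang S) → D⟦j⟧ ∈ μ.M i

/-- An object `B` of `Mod-S` is homological if `Hom(-, B)` restricts to a homological
functor on `Sᵒᵖ`, i.e. `B` sends distinguished triangles to exact sequences. -/
def IsHomological (B : Sᵒᵖ ⥤ AddCommGrpCat.{v}) : Prop :=
  ∀ T ∈ (distTriang S), Function.Exact (B.map T.mor₂.op) (B.map T.mor₁.op)

open Opposite

section Sequential

variable {C : Type*} [Category C] {F : ℕ ⥤ C} {B : C} {i : ℕ}

theorem bijective_precomp_map_of_le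
    (hF : ∀ k, i ≤ k →
      Function.Bijective fun g : F.obj (k + 1) ⟶ B => F.map (homOfLE k.le_succ) ≫ g)
    {m : ℕ} (him : i ≤ m) :
    Function.Bijective fun g : F.obj m ⟶ B => F.map (homOfLE him) ≫ g := by
  induction m, him using Nat.le_induction with
  | base =>
    simp only [homOfLE_refl, F.map_id, id_comp]
    exact Function.bijective_id
  | succ m him ih =>
    convert ih.comp (hF m him) using 1
    funext g
    simp only [Function.comp_apply, ← assoc, ← F.map_comp, homOfLE_comp]

theorem existsUnique_desc_of_bijective_precomp {c : Cocone F} (hc : IsColimit c)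
    (hF : ∀ k, i ≤ k →
      Function.Bijective fun g : F.obj (k + 1) ⟶ B => F.map (homOfLE k.le_succ) ≫ g)
    (f : F.obj i ⟶ B) : ∃! φ : c.pt ⟶ B, c.ι.app i ≫ φ = f := by
  have hres := fun m (h : i ≤ m) => bijective_precomp_map_of_le hF h
  choose G hG using fun m (h : i ≤ m) => (hres m h).2 f
  have compat : ∀ m m' (h : i ≤ m) (h' : m ≤ m'),
      F.map (homOfLE h') ≫ G m' (h.trans h') = G m h :=
    fun m m' h h' => (hres m h).1 <| by
      simp only [← assoc, ← F.map_comp, homOfLE_comp, hG]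
  -- the leg at `m` restricts to `m` the extension of `f` to stage `max m i`
  let K : Cocone F :=
    { pt := B
      ι := { app := fun m => F.map (homOfLE (le_max_left m i)) ≫ G _ (le_max_right m i)
             naturality := fun m m' h => by
               simp only [Functor.const_obj_obj, Functor.const_obj_map, comp_id]
               rw [← compat (max m i) (max m' i) (le_max_right m i)
                 (max_le_max_right i (leOfHom h)), ← assoc, ← assoc, ← F.map_comp,
                 ← F.map_comp]
               rfl } }
  have hdesc : c.ι.app i ≫ hc.desc K = f := (hc.fac K i).trans (hG _ _)
  have hom_ext : ∀ φ φ' : c.pt ⟶ B, c.ι.app i ≫ φ = c.ι.app i ≫ φ' → φ = φ' := by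
    intro φ φ' h
    refine hc.hom_ext fun m => ?_
    rw [← c.w (homOfLE (le_max_left m i)), assoc, assoc]
    congr 1
    apply (hres _ (le_max_right m i)).1
    simp only [← assoc, c.w]
    exact h
  exact ⟨hc.desc K, hdesc, fun φ hφ => hom_ext _ _ (hφ.trans hdesc.symm)⟩

end Sequential

section

variable {C : Type*} [Category C] (B : Cᵒᵖ ⥤ AddCommGrpCat.{v})

theorem map_op_map_op_apply {x y z : C} (f : x ⟶ y) (g : y ⟶ z) (b : B.obj (op z)) :
    B.map f.op (B.map g.op b) = B.map (f ≫ g).op b := by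
  simp only [op_comp, Functor.map_comp, ConcreteCategory.comp_apply]

theorem map_op_id_apply {x : C} (b : B.obj (op x)) : B.map (𝟙 x).op b = b := by
  rw [op_id, B.map_id, AddCommGrpCat.id_apply]

end

section Yoneda

variable {C : Type*} [Category.{v} C] [Preadditive C] {B : Cᵒᵖ ⥤ AddCommGrpCat.{v}}

theorem preadditiveYoneda_hom_app_apply {x : C} (g : preadditiveYoneda.obj x ⟶ B) {w : Cᵒᵖ}
    (t : w.unop ⟶ x) : g.app w t = B.map t.op (g.app (op x) (𝟙 x)) := by
  rw [← NatTrans.naturality_apply g t.op (𝟙 x)]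
  exact congrArg (g.app w) (comp_id t).symm

variable [B.Additive]

variable (B) in
def preadditiveYonedaHomEquiv (x : C) : (preadditiveYoneda.obj x ⟶ B) ≃ B.obj (op x) where
  toFun g := g.app (op x) (𝟙 x)
  invFun b :=
    { app w := AddCommGrpCat.ofHom
        { toFun t := B.map t.op b
          map_zero' := by
            change B.map (0 : w.unop ⟶ x).op b = 0
            rw [op_zero, B.map_zero]
            rfl
          map_add' (t t' : w.unop ⟶ x) := by
            change B.map (t + t').op b = _
            rw [op_add, B.map_add]
            rfl }
      naturality w w' h := by
        ext t
        exact (map_op_map_op_apply B h.unop t b).symm }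
  left_inv g := by
    ext w t
    exact (preadditiveYoneda_hom_app_apply g t).symm
  right_inv b := map_op_id_apply B b

theorem preadditiveYonedaHomEquiv_comp {x y : C} (u : x ⟶ y)
    (g : preadditiveYoneda.obj y ⟶ B) :
    preadditiveYonedaHomEquiv B x (preadditiveYoneda.map u ≫ g) =
      B.map u.op (preadditiveYonedaHomEquiv B y g) := by
  change g.app (op x) (𝟙 x ≫ u) = _
  rw [id_comp, preadditiveYoneda_hom_app_apply g u]
  rfl

theorem bijective_preadditiveYoneda_precomp_iff {x y : C} (u : x ⟶ y) :
    Function.Bijective (fun g : preadditiveYoneda.obj y ⟶ B => preadditiveYoneda.map u ≫ g) ↔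
      Function.Bijective (B.map u.op) := by
  have : (fun g : preadditiveYoneda.obj y ⟶ B => preadditiveYoneda.map u ≫ g) =
      (preadditiveYonedaHomEquiv B x).symm ∘ B.map u.op ∘ preadditiveYonedaHomEquiv B y := by
    funext g
    simp [Equiv.eq_symm_apply, preadditiveYonedaHomEquiv_comp]
  rw [this, Equiv.comp_bijective, Equiv.bijective_comp]

theorem subsingleton_of_forall_preadditiveYoneda_hom_eq_zero {x : C}
    (h : ∀ ψ : preadditiveYoneda.obj x ⟶ B, ψ = 0) : Subsingleton (B.obj (op x)) :=
  (preadditiveYonedaHomEquiv B x).symm.subsingleton_congr.2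
    ⟨fun ψ ψ' => (h ψ).trans (h ψ').symm⟩

end Yoneda

namespace IsHomological

variable {B : Sᵒᵖ ⥤ AddCommGrpCat.{v}} (hB : IsHomological B)
include hB

theorem map_zero_apply {w x : S} (b : B.obj (op x)) : B.map (0 : w ⟶ x).op b = 0 := by
  have hw : ∀ y : B.obj (op (0 : S)), B.map (0 : w ⟶ 0).op y = 0 := fun y =>
    (map_op_id_apply B _).symm.trans ((hB _ (contractible_distinguished w)).apply_apply_eq_zero y)
  simpa only [map_op_map_op_apply, zero_comp] using hw (B.map (0 : (0 : S) ⟶ x).op b)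

theorem eq_add_of_biprod {x y : S} (q : B.obj (op (x ⊞ y))) :
    q = B.map biprod.fst.op (B.map biprod.inl.op q) +
      B.map biprod.snd.op (B.map biprod.inr.op q) := by
  have hexact : Function.Exact (B.map (biprod.snd : x ⊞ y ⟶ y).op) (B.map biprod.inl.op) :=
    hB _ (binaryBiproductTriangle_distinguished x y)
  have hker : B.map biprod.inl.op (q - B.map biprod.fst.op (B.map biprod.inl.op q)) = 0 := by
    simp only [map_sub, map_op_map_op_apply, biprod.inl_fst_assoc, sub_self]
  obtain ⟨z, hz⟩ := (hexact _).1 hker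
  have hzq : z = B.map biprod.inr.op q := by
    simpa only [map_sub, map_op_map_op_apply, biprod.inr_snd, biprod.inr_fst_assoc, zero_comp,
      map_op_id_apply, map_zero_apply hB, sub_zero]
      using congrArg (B.map (biprod.inr : y ⟶ x ⊞ y).op) hz
  rw [← hzq, hz, add_sub_cancel]

theorem map_add_apply {w x : S} (t t' : w ⟶ x) (b : B.obj (op x)) :
    B.map (t + t').op b = B.map t.op b + B.map t'.op b := by
  have hsum : t + t' = biprod.lift t t' ≫ biprod.desc (𝟙 x) (𝟙 x) := by simp
  rw [hsum, ← map_op_map_op_apply,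
    eq_add_of_biprod hB (B.map (biprod.desc (𝟙 x) (𝟙 x)).op b)]
  simp only [map_add, map_op_map_op_apply, biprod.inl_desc, biprod.inr_desc, comp_id,
    biprod.lift_fst, biprod.lift_snd]

theorem additive : B.Additive where
  map_add {x y} t t' := by
    ext b
    exact map_add_apply hB t.unop t'.unop b

theorem bijective_map_mor₁_op {T : Triangle S} (hT : T ∈ distTriang S)
    (h₃ : Subsingleton (B.obj (op T.obj₃)))
    (h₃' : Subsingleton (B.obj (op (T.obj₃⟦(-1 : ℤ)⟧)))) :
    Function.Bijective (B.map T.mor₁.op) := by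
  refine ⟨(injective_iff_map_eq_zero _).2 fun b hb => ?_, fun b => ?_⟩
  · obtain ⟨c, rfl⟩ := (hB T hT b).1 hb
    rw [h₃.elim c 0, map_zero]
  · exact (hB _ (inv_rot_of_distTriang T hT) b).1 (h₃'.elim _ _)

end IsHomological

theorem statement2 (μ : TriMetric S) (B : Sᵒᵖ ⥤ AddCommGrpCat.{v})
    (hBhom : IsHomological B)
    (a : ℕ ⥤ S)
    (c : Cocone (a ⋙ preadditiveYoneda)) (hc : IsColimit c)
    (j : ℕ) (hBj : ∀ s ∈ μ.M j, ∀ f : preadditiveYoneda.obj s ⟶ B, f = 0)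
    (n : ℕ)
    (hn : ∀ i : ℕ, n ≤ i → ∀ (d : S) (g : a.obj (i + 1) ⟶ d) (h : d ⟶ (a.obj i)⟦(1 : ℤ)⟧),
      Triangle.mk (a.map (homOfLE (Nat.le_succ i))) g h ∈ (distTriang S) →
        d⟦(-1 : ℤ)⟧ ∈ μ.M j ∧ d ∈ μ.M j) :
    ∀ i : ℕ, n ≤ i → ∀ f : preadditiveYoneda.obj (a.obj i) ⟶ B,
      ∃! φ : c.pt ⟶ B, c.ι.app i ≫ φ = f := by
  have := hBhom.additive
  have hvanish : ∀ s ∈ μ.M j, Subsingleton (B.obj (op s)) := fun s hs =>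
    subsingleton_of_forall_preadditiveYoneda_hom_eq_zero (hBj s hs)
  intro i hi f
  refine existsUnique_desc_of_bijective_precomp hc (fun k hk => ?_) f
  obtain ⟨d, g, h, hT⟩ := distinguished_cocone_triangle (a.map (homOfLE k.le_succ))
  obtain ⟨hd', hd⟩ := hn k (hi.trans hk) d g h hT
  exact (bijective_preadditiveYoneda_precomp_iff _).2
    (hBhom.bijective_map_mor₁_op hT (hvanish d hd) (hvanish _ hd'))

end Stmt2
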